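/- arXiv:1111.1871 — 2 statements merged into one kernel-verified Lean document; each statement's English description precedes it below -/
import Mathlib

section
/- Let (a_t) be the real sequence defined by a_0 = 0 and a_t = (t/(2t+1))(1 - a_{t-1}) + a_{t-1} for t ≥ 1. Then (a_t) is strictly increasing and a_t → 1 as t → ∞. -/
theorem a_strictMono_tendsto (a : ℕ → ℝ) (h0 : a 0 = 0)
    (hrec : ∀ t : ℕ, 1 ≤ t → a t = ((t : ℝ) / (2 * t + 1)) * (1 - a (t - 1)) + a (t - 1)) :
    StrictMono a ∧ Filter.Tendsto a Filter.atTop (nhds 1) := by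
  have key : ∀ t : ℕ, 0 < 1 - a t ∧ 1 - a t ≤ (2/3 : ℝ) ^ t := by
    intro t
    induction t with
    | zero => simp [h0]
    | succ n ih =>
      have hr := hrec (n + 1) (by omega)
      simp only [Nat.add_sub_cancel] at hr
      have hcast : ((n + 1 : ℕ) : ℝ) = (n : ℝ) + 1 := by push_cast; ring
      have heq : 1 - a (n + 1) = (((n : ℝ) + 2) / (2 * n + 3)) * (1 - a n) := by
        rw [hr, hcast]
        have hpos : (2 * (n : ℝ) + 3) ≠ 0 := by positivity
        field_simp
        ring
      constructor
      · rw [heq]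
        have : (0 : ℝ) < ((n : ℝ) + 2) / (2 * n + 3) := by positivity
        exact mul_pos this ih.1
      · rw [heq, pow_succ]
        have h1 : ((n : ℝ) + 2) / (2 * n + 3) ≤ 2/3 := by
          rw [div_le_div_iff₀ (by positivity) (by norm_num)]
          nlinarith [Nat.cast_nonneg (α := ℝ) n]
        calc (((n : ℝ) + 2) / (2 * n + 3)) * (1 - a n)
            ≤ (2/3) * (1 - a n) := mul_le_mul_of_nonneg_right h1 ih.1.le
          _ ≤ (2/3) * (2/3 : ℝ) ^ n := by nlinarith [ih.2]
          _ = (2/3 : ℝ) ^ n * (2/3) := by ring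
  constructor
  · apply strictMono_nat_of_lt_succ
    intro n
    have hr := hrec (n + 1) (by omega)
    simp only [Nat.add_sub_cancel] at hr
    have h1 : (0 : ℝ) < ((n + 1 : ℕ) : ℝ) / (2 * ((n + 1 : ℕ) : ℝ) + 1) := by positivity
    nlinarith [(key n).1]
  · have hb : Filter.Tendsto (fun t => 1 - a t) Filter.atTop (nhds 0) := by
      apply squeeze_zero (fun t => (key t).1.le) (fun t => (key t).2)
      exact tendsto_pow_atTop_nhds_zero_of_lt_one (by norm_num) (by norm_num)
    have := hb.const_sub 1
    simp only [sub_sub_cancel, sub_zero] at this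
    exact this
end

section
/- Let (a_t) be the real sequence defined by a_0 = 0 and a_t = (t/(2t+1))(1 - a_{t-1}) + a_{t-1} for t ≥ 1. Then for every t ≥ 5, 2^t / √t < 1 / (1 - a_t). -/
theorem pow_div_sqrt_lt (a : ℕ → ℝ) (h0 : a 0 = 0)
    (hrec : ∀ t : ℕ, 1 ≤ t → a t = ((t : ℝ) / (2 * t + 1)) * (1 - a (t - 1)) + a (t - 1)) :
    ∀ t : ℕ, 5 ≤ t → (2 : ℝ) ^ t / Real.sqrt t < 1 / (1 - a t) := by
  have hstep : ∀ t : ℕ, 1 - a (t + 1) = (1 - a t) * (((t : ℝ) + 2) / (2 * t + 3)) := by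
    intro t
    have h := hrec (t + 1) (by omega)
    simp only [Nat.add_sub_cancel] at h
    push_cast at h
    rw [h]
    have hd : (2 * ((t : ℝ) + 1) + 1) ≠ 0 := by positivity
    field_simp
    ring
  have hpos : ∀ t : ℕ, 0 < 1 - a t := by
    intro t
    induction t with
    | zero => simp [h0]
    | succ n ih =>
      rw [hstep n]
      have : (0:ℝ) < ((n : ℝ) + 2) / (2 * n + 3) := by positivity
      positivity
  have e1 : 1 - a 1 = 2 / 3 := by have h := hstep 0; rw [h0] at h; norm_num at h; linarith
  have e2 : 1 - a 2 = 2 / 5 := by have h := hstep 1; rw [show a (1+1) = a 2 from rfl] at h; rw [h, e1]; norm_num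
  have e3 : 1 - a 3 = 8 / 35 := by have h := hstep 2; rw [show a (2+1) = a 3 from rfl] at h; rw [h, e2]; norm_num
  have e4 : 1 - a 4 = 8 / 63 := by have h := hstep 3; rw [show a (3+1) = a 4 from rfl] at h; rw [h, e3]; norm_num
  have h5 : 1 - a 5 = 16 / 231 := by have h := hstep 4; rw [show a (4+1) = a 5 from rfl] at h; rw [h, e4]; norm_num
  intro t ht
  induction t, ht using Nat.le_induction with
  | base =>
    rw [h5]
    have hs : (512 / 231 : ℝ) < Real.sqrt 5 := by
      exact (Real.lt_sqrt (by norm_num)).mpr (by norm_num)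
    push_cast
    calc (2:ℝ)^5 / Real.sqrt 5 < (2:ℝ)^5 / (512/231) :=
          div_lt_div_of_pos_left (by norm_num) (by norm_num) hs
      _ = 1 / (16/231) := by norm_num
  | succ n hn ih =>
    have hu := hpos n
    have hn0 : (0:ℝ) < (n:ℝ) := by exact_mod_cast (by omega : 0 < n)
    have hst : 0 < Real.sqrt n := Real.sqrt_pos.mpr hn0
    have hst1 : 0 < Real.sqrt ((n:ℝ) + 1) := Real.sqrt_pos.mpr (by linarith)
    have hs2 : Real.sqrt (n:ℝ) ^ 2 = (n:ℝ) := Real.sq_sqrt hn0.le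
    have hs12 : Real.sqrt ((n:ℝ) + 1) ^ 2 = (n:ℝ) + 1 := Real.sq_sqrt (by linarith)
    rw [div_lt_div_iff₀ hst hu] at ih
    -- ih : 2^n * (1 - a n) < √n * 1
    have hA : 2 * ((n:ℝ) + 2) * Real.sqrt n ≤ (2 * (n:ℝ) + 3) * Real.sqrt ((n:ℝ) + 1) := by
      have hsq : (2 * ((n:ℝ) + 2) * Real.sqrt n) ^ 2
          ≤ ((2 * (n:ℝ) + 3) * Real.sqrt ((n:ℝ) + 1)) ^ 2 := by
        simp only [mul_pow]
        rw [hs2, hs12]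
        nlinarith [hn0]
      calc 2 * ((n:ℝ) + 2) * Real.sqrt n
          = Real.sqrt ((2 * ((n:ℝ) + 2) * Real.sqrt n) ^ 2) :=
            (Real.sqrt_sq (by positivity)).symm
        _ ≤ Real.sqrt (((2 * (n:ℝ) + 3) * Real.sqrt ((n:ℝ) + 1)) ^ 2) :=
            Real.sqrt_le_sqrt hsq
        _ = (2 * (n:ℝ) + 3) * Real.sqrt ((n:ℝ) + 1) := Real.sqrt_sq (by positivity)
    rw [hstep n]
    have hcast : ((n + 1 : ℕ) : ℝ) = (n:ℝ) + 1 := by push_cast; ring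
    rw [hcast]
    have hprod : (0:ℝ) < (1 - a n) * (((n:ℝ) + 2) / (2 * n + 3)) := by
      have : (0:ℝ) < ((n:ℝ) + 2) / (2 * n + 3) := by positivity
      positivity
    rw [div_lt_div_iff₀ hst1 hprod]
    have h3 : (0:ℝ) < 2 * (n:ℝ) + 3 := by positivity
    have hkey : 2 ^ (n + 1) * ((1 - a n) * (((n:ℝ) + 2) / (2 * n + 3)))
        = (2 ^ (n + 1) * (1 - a n) * ((n:ℝ) + 2)) / (2 * (n:ℝ) + 3) := by ring
    rw [hkey, div_lt_iff₀ h3, pow_succ]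
    have hmul := mul_lt_mul_of_pos_left ih (show (0:ℝ) < 2 * ((n:ℝ) + 2) by positivity)
    nlinarith [hA, hmul]
end
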